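/- arXiv:1410.1800 — 11 statements merged into one kernel-verified Lean document; each statement's English description precedes it below -/
import Mathlib

section
/- For every integer a, the composition f_a(f_a(x)) factors as g_a(x) * h_a(x) in ℤ[x], where f_a(x) = -8a x^3 - (8a+2) x^2 + (4a-1) x + a, g_a(x) = 32a^2 x^3 + (32a^2+16a) x^2 + (-16a^2+12a+2) x + (-4a^2-4a+1), and h_a(x) = 128a^2 x^6 + (256a^2+32a) x^5 + 32a x^4 + (-160a^2-16a-4) x^3 - (4a+2) x^2 + (16a^2+1) x + 2a^2. -/
open Polynomial

set_option maxHeartbeats 2000000 in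
theorem stmt_0 (a : ℤ) :
    ((C (-8*a) * X^3 - C (8*a+2) * X^2 + C (4*a-1) * X + C a : Polynomial ℤ).comp
      (C (-8*a) * X^3 - C (8*a+2) * X^2 + C (4*a-1) * X + C a)) =
    (C (32*a^2) * X^3 + C (32*a^2+16*a) * X^2 + C (-16*a^2+12*a+2) * X + C (-4*a^2-4*a+1)) *
    (C (128*a^2) * X^6 + C (256*a^2+32*a) * X^5 + C (32*a) * X^4 + C (-160*a^2-16*a-4) * X^3
      - C (4*a+2) * X^2 + C (16*a^2+1) * X + C (2*a^2)) := by
  apply Polynomial.funext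
  intro x
  simp only [eval_comp, eval_add, eval_sub, eval_mul, eval_pow, eval_C, eval_X, eval_neg]
  ring
end

section
/- For every integer a not divisible by 3, the polynomial f_a(x) = -8a x^3 - (8a+2) x^2 + (4a-1) x + a is irreducible in ℤ[x]. -/
open Polynomial

private lemma zmod3_no_root : ∀ b r : ZMod 3, b ≠ 0 →
    -8*b*r^3 - (8*b+2)*r^2 + (4*b-1)*r + b ≠ 0 := by decide

theorem stmt_5 (a : ℤ) (h : ¬ (3 ∣ a)) :
    Irreducible (C (-8*a) * X^3 - C (8*a+2) * X^2 + C (4*a-1) * X + C a : Polynomial ℤ) := by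
  set f : Polynomial ℤ := C (-8*a) * X^3 - C (8*a+2) * X^2 + C (4*a-1) * X + C a with hf
  have ha0 : a ≠ 0 := by rintro rfl; exact h ⟨0, rfl⟩
  have hb : ((a : ZMod 3)) ≠ 0 := by
    rwa [Ne, ZMod.intCast_zmod_eq_zero_iff_dvd]
  set b : ZMod 3 := (a : ZMod 3) with hbdef
  -- degree of f
  have hdegf : f.natDegree = 3 := by
    rw [hf]; compute_degree!
  have hf0 : f ≠ 0 := fun hcon => by simp [hcon] at hdegf
  -- the reduction mod 3
  set g : Polynomial (ZMod 3) := f.map (Int.castRingHom (ZMod 3)) with hg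
  have hgform : g = C (-8*b) * X^3 - C (8*b+2) * X^2 + C (4*b-1) * X + C b := by
    rw [hg, hf]
    simp only [Polynomial.map_add, Polynomial.map_sub, Polynomial.map_mul,
      Polynomial.map_pow, Polynomial.map_C, Polynomial.map_X, Int.coe_castRingHom]
    push_cast
    ring
  have hlead : (-8 * b : ZMod 3) ≠ 0 := by
    intro hcon
    apply hb
    have : (-8 : ZMod 3) ≠ 0 := by decide
    exact (mul_eq_zero.mp hcon).resolve_left this
  have hdegg : g.natDegree = 3 := by
    rw [hgform]; compute_degree!
  have hg0 : g ≠ 0 := fun hcon => by simp [hcon] at hdegg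
  -- g is irreducible
  have hgirr : Irreducible g := by
    rw [irreducible_iff_roots_eq_zero_of_degree_le_three (by omega) (by omega)]
    rw [Multiset.eq_zero_iff_forall_notMem]
    intro r hr
    rw [mem_roots hg0] at hr
    have hev : g.eval r = -8*b*r^3 - (8*b+2)*r^2 + (4*b-1)*r + b := by
      rw [hgform]; simp
    exact zmod3_no_root b r hb (by rw [← hev]; exact hr)
  -- f is primitive
  have hprim : f.IsPrimitive := by
    intro c hc
    rw [C_dvd_iff_dvd_coeff] at hc
    have h0 : c ∣ f.coeff 0 := hc 0
    have h1 : c ∣ f.coeff 1 := hc 1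
    have hc0 : f.coeff 0 = a := by rw [hf]; simp
    have hc1 : f.coeff 1 = 4*a - 1 := by
      rw [hf]
      simp only [coeff_add, coeff_sub, coeff_C_mul, coeff_X_pow, coeff_X_one, coeff_C]
      norm_num
    rw [hc0] at h0; rw [hc1] at h1
    have h2 : c ∣ 4*a - (4*a - 1) := dvd_sub (h0.mul_left 4) h1
    rw [show (4*a - (4*a-1) : ℤ) = 1 by ring] at h2
    exact isUnit_of_dvd_one h2
  -- conclude
  constructor
  · intro hu
    have := natDegree_eq_zero_of_isUnit hu
    omega
  · intro p q hpq
    have hp0 : p ≠ 0 := fun hcon => hf0 (by rw [hpq, hcon, zero_mul])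
    have hq0 : q ≠ 0 := fun hcon => hf0 (by rw [hpq, hcon, mul_zero])
    have hgpq : g = p.map (Int.castRingHom (ZMod 3)) * q.map (Int.castRingHom (ZMod 3)) := by
      rw [hg, hpq, Polynomial.map_mul]
    have hp0' : p.map (Int.castRingHom (ZMod 3)) ≠ 0 := fun hcon => hg0 (by rw [hgpq, hcon, zero_mul])
    have hq0' : q.map (Int.castRingHom (ZMod 3)) ≠ 0 := fun hcon => hg0 (by rw [hgpq, hcon, mul_zero])
    have hdsum : p.natDegree + q.natDegree = 3 := by
      rw [← hdegf, hpq, natDegree_mul hp0 hq0]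
    have hdsum' : (p.map (Int.castRingHom (ZMod 3))).natDegree
        + (q.map (Int.castRingHom (ZMod 3))).natDegree = 3 := by
      rw [← natDegree_mul hp0' hq0', ← hgpq]; exact hdegg
    have hple := (natDegree_map_le : (p.map (Int.castRingHom (ZMod 3))).natDegree ≤ p.natDegree)
    have hqle := (natDegree_map_le : (q.map (Int.castRingHom (ZMod 3))).natDegree ≤ q.natDegree)
    rcases hgirr.isUnit_or_isUnit hgpq with hu | hu
    · left
      have hd0 : (p.map (Int.castRingHom (ZMod 3))).natDegree = 0 :=
        natDegree_eq_zero_of_isUnit hu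
      have hpd : p.natDegree = 0 := by omega
      obtain ⟨c, rfl⟩ := natDegree_eq_zero.mp hpd
      have : IsUnit c := hprim c ⟨q, hpq⟩
      exact isUnit_C.mpr this
    · right
      have hd0 : (q.map (Int.castRingHom (ZMod 3))).natDegree = 0 :=
        natDegree_eq_zero_of_isUnit hu
      have hqd : q.natDegree = 0 := by omega
      obtain ⟨c, rfl⟩ := natDegree_eq_zero.mp hqd
      have : IsUnit c := hprim c ⟨p, by rw [hpq]; ring⟩
      exact isUnit_C.mpr this
end

section
/- For every integer a not divisible by 3, the polynomial f_a(x) = -8a x^3 - (8a+2) x^2 + (4a-1) x + a is irreducible over ℚ. -/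
open Polynomial

theorem stmt_6 (a : ℤ) (h : ¬ (3 ∣ a)) :
    Irreducible ((C (-8*a) * X^3 - C (8*a+2) * X^2 + C (4*a-1) * X + C a : Polynomial ℤ).map
      (Int.castRingHom ℚ)) := by
  have ha : a ≠ 0 := by rintro rfl; exact h ⟨0, by ring⟩
  have haq : (-8 * a : ℚ) ≠ 0 := by
    simp only [ne_eq, mul_eq_zero]
    push_neg
    exact ⟨by norm_num, by exact_mod_cast ha⟩
  have hmap : ((C (-8*a) * X^3 - C (8*a+2) * X^2 + C (4*a-1) * X + C a : Polynomial ℤ).map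
      (Int.castRingHom ℚ)) =
      (C (-8*(a:ℚ)) * X^3 - C (8*(a:ℚ)+2) * X^2 + C (4*(a:ℚ)-1) * X + C (a:ℚ)) := by
    simp only [Polynomial.map_add, Polynomial.map_sub, Polynomial.map_mul, Polynomial.map_pow,
      Polynomial.map_C, Polynomial.map_X, Int.coe_castRingHom]
    push_cast
    ring
  rw [hmap]
  have hdeg : (C (-8*(a:ℚ)) * X^3 - C (8*(a:ℚ)+2) * X^2 + C (4*(a:ℚ)-1) * X
      + C (a:ℚ)).natDegree = 3 := by
    compute_degree!
  rw [irreducible_iff_roots_eq_zero_of_degree_le_three (by omega) (by omega)]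
  rw [Multiset.eq_zero_iff_forall_notMem]
  intro r hr
  have hne : (C (-8*(a:ℚ)) * X^3 - C (8*(a:ℚ)+2) * X^2 + C (4*(a:ℚ)-1) * X + C (a:ℚ)) ≠ 0 := by
    intro h0
    rw [h0] at hdeg
    simp at hdeg
  rw [mem_roots hne, IsRoot.def] at hr
  simp only [eval_add, eval_sub, eval_mul, eval_pow, eval_C, eval_X] at hr
  -- clear denominators
  set m : ℤ := r.num with hm
  set n : ℤ := (r.den : ℤ) with hn
  have hn0 : (n : ℚ) ≠ 0 := by
    simp [hn]
  have hrmn : (m : ℚ) = r * n := by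
    have hden : ((r.den : ℚ)) ≠ 0 := by exact_mod_cast r.den_nz
    rw [hm, hn]
    push_cast
    exact (div_eq_iff hden).mp (Rat.num_div_den r)
  have key : (-8*a) * m^3 - (8*a+2) * m^2 * n + (4*a-1) * m * n^2 + a * n^3 = 0 := by
    have : ((-8*a) * m^3 - (8*a+2) * m^2 * n + (4*a-1) * m * n^2 + a * n^3 : ℚ)
        = (-8 * a * r ^ 3 - (8 * a + 2) * r ^ 2 + (4 * a - 1) * r + a) * n^3 := by
      rw [show ((m:ℤ):ℚ) = r * n by exact_mod_cast hrmn]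
      push_cast
      ring
    rw [hr, zero_mul] at this
    exact_mod_cast this
  -- reduce mod 3
  have key3 : ((-8*(a : ZMod 3)) * (m : ZMod 3)^3 - (8*(a:ZMod 3)+2) * (m:ZMod 3)^2 * (n:ZMod 3)
      + (4*(a:ZMod 3)-1) * (m:ZMod 3) * (n:ZMod 3)^2 + (a:ZMod 3) * (n:ZMod 3)^3) = 0 := by
    have := congrArg (Int.cast : ℤ → ZMod 3) key
    push_cast at this
    convert this using 1
  have ha3 : (a : ZMod 3) ≠ 0 := by
    rwa [Ne, ZMod.intCast_zmod_eq_zero_iff_dvd]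
  have hdecide : ∀ A M N : ZMod 3, A ≠ 0 →
      (-8*A) * M^3 - (8*A+2) * M^2 * N + (4*A-1) * M * N^2 + A * N^3 = 0 → M = 0 ∧ N = 0 := by
    decide
  obtain ⟨hm3, hn3⟩ := hdecide _ _ _ ha3 key3
  rw [ZMod.intCast_zmod_eq_zero_iff_dvd] at hm3 hn3
  -- contradiction with coprimality
  have hcop := r.reduced
  have h3m : 3 ∣ r.num.natAbs := by
    have := Int.natAbs_dvd_natAbs.mpr hm3
    simpa using this
  have h3n : 3 ∣ r.den := by
    have := Int.natAbs_dvd_natAbs.mpr hn3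
    simpa [hn] using this
  exact absurd (hcop ▸ Nat.dvd_gcd h3m h3n) (by norm_num)
end

section
/- For every nonzero integer a, the polynomial f_a(f_a(x)) is reducible in ℤ[x], where f_a(x) = -8a x^3 - (8a+2) x^2 + (4a-1) x + a. -/
open Polynomial

theorem stmt_7 (a : ℤ) (ha : a ≠ 0) :
    ¬ IsUnit ((C (-8*a) * X^3 - C (8*a+2) * X^2 + C (4*a-1) * X + C a : Polynomial ℤ).comp
        (C (-8*a) * X^3 - C (8*a+2) * X^2 + C (4*a-1) * X + C a)) ∧
    ¬ Irreducible ((C (-8*a) * X^3 - C (8*a+2) * X^2 + C (4*a-1) * X + C a : Polynomial ℤ).comp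
        (C (-8*a) * X^3 - C (8*a+2) * X^2 + C (4*a-1) * X + C a)) := by
  set p : Polynomial ℤ := C (32*a^2) * X^3 + C (32*a^2+16*a) * X^2
      + C (-16*a^2+12*a+2) * X + C (-4*a^2-4*a+1) with hp
  set q : Polynomial ℤ := C (128*a^2) * X^6 + C (256*a^2+32*a) * X^5 + C (32*a) * X^4
      + C (-160*a^2-16*a-4) * X^3 + C (-4*a-2) * X^2 + C (16*a^2+1) * X + C (2*a^2) with hq
  have hcomp : ((C (-8*a) * X^3 - C (8*a+2) * X^2 + C (4*a-1) * X + C a : Polynomial ℤ).comp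
      (C (-8*a) * X^3 - C (8*a+2) * X^2 + C (4*a-1) * X + C a)) = p * q := by
    rw [hp, hq]
    simp only [comp, eval₂_add, eval₂_sub, eval₂_mul, eval₂_pow, eval₂_X, eval₂_C]
    simp only [map_add, map_sub, map_mul, map_neg, map_pow, map_ofNat, map_one]
    ring
  have hpdeg : p.natDegree = 3 := by
    rw [hp]; compute_degree!
  have hqdeg : q.natDegree = 6 := by
    rw [hq]; compute_degree!
  have hpne : p ≠ 0 := fun h => by simp [h] at hpdeg
  have hqne : q ≠ 0 := fun h => by simp [h] at hqdeg
  have hpu : ¬ IsUnit p := fun h => by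
    have := natDegree_eq_zero_of_isUnit h; omega
  have hqu : ¬ IsUnit q := fun h => by
    have := natDegree_eq_zero_of_isUnit h; omega
  rw [hcomp]
  constructor
  · intro h
    exact hpu (isUnit_of_mul_isUnit_left h)
  · intro h
    rcases h.isUnit_or_isUnit rfl with h' | h'
    · exact hpu h'
    · exact hqu h'
end

section
/- For every integer a not divisible by 3, the polynomial f_a(x) = -8a x^3 - (8a+2) x^2 + (4a-1) x + a has emergent reducibility at depth 1: f_a is irreducible in ℤ[x] and f_a ∘ f_a is reducible in ℤ[x]. -/
open Polynomial

private lemma zmod3_cubic_no_root : ∀ b x : ZMod 3, b ≠ 0 →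
    -8*b*x^3 - (8*b+2)*x^2 + (4*b-1)*x + b ≠ 0 := by decide

theorem stmt_9 (a : ℤ) (h : ¬ (3 ∣ a)) :
    Irreducible (C (-8*a) * X^3 - C (8*a+2) * X^2 + C (4*a-1) * X + C a : Polynomial ℤ) ∧
    ¬ IsUnit ((C (-8*a) * X^3 - C (8*a+2) * X^2 + C (4*a-1) * X + C a : Polynomial ℤ).comp
        (C (-8*a) * X^3 - C (8*a+2) * X^2 + C (4*a-1) * X + C a)) ∧
    ¬ Irreducible ((C (-8*a) * X^3 - C (8*a+2) * X^2 + C (4*a-1) * X + C a : Polynomial ℤ).comp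
        (C (-8*a) * X^3 - C (8*a+2) * X^2 + C (4*a-1) * X + C a)) := by
  have ha0 : a ≠ 0 := fun h0 => h (h0 ▸ dvd_zero 3)
  set f : ℤ[X] := C (-8*a) * X^3 - C (8*a+2) * X^2 + C (4*a-1) * X + C a with hf
  have hb : ((a : ZMod 3)) ≠ 0 := by
    rw [Ne, ZMod.intCast_zmod_eq_zero_iff_dvd]
    exact_mod_cast h
  have hmapf : f.map (Int.castRingHom (ZMod 3)) =
      C (-8*(a : ZMod 3)) * X^3 - C (8*(a : ZMod 3)+2) * X^2
        + C (4*(a : ZMod 3)-1) * X + C (a : ZMod 3) := by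
    rw [hf]
    simp only [Polynomial.map_add, Polynomial.map_sub, Polynomial.map_mul, Polynomial.map_pow,
      map_X, map_C, Int.coe_castRingHom]
    push_cast
    ring
  have hdegbar : (f.map (Int.castRingHom (ZMod 3))).natDegree = 3 := by
    rw [hmapf]
    compute_degree!
  have hbarne : f.map (Int.castRingHom (ZMod 3)) ≠ 0 := by
    intro h0; rw [h0] at hdegbar; simp at hdegbar
  have hirr : Irreducible (f.map (Int.castRingHom (ZMod 3))) := by
    rw [irreducible_iff_roots_eq_zero_of_degree_le_three (by omega) (by omega)]
    rw [Multiset.eq_zero_iff_forall_notMem]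
    intro x hx
    rw [mem_roots hbarne, IsRoot, hmapf] at hx
    simp only [eval_add, eval_sub, eval_mul, eval_pow, eval_C, eval_X] at hx
    exact zmod3_cubic_no_root _ x hb hx
  have hdegf : f.natDegree = 3 := by
    rw [hf]; compute_degree! <;> omega
  have hfne : f ≠ 0 := fun h0 => by rw [h0] at hdegf; simp at hdegf
  have coeff0 : f.coeff 0 = a := by
    rw [hf]
    simp only [coeff_add, coeff_sub, coeff_C_mul, coeff_X_pow, coeff_X, coeff_C]
    norm_num
  have coeff1 : f.coeff 1 = 4*a - 1 := by
    rw [hf]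
    simp only [coeff_add, coeff_sub, coeff_C_mul, coeff_X_pow, coeff_X, coeff_C]
    norm_num
  have key : ∀ u v : ℤ[X], f = u * v → IsUnit (u.map (Int.castRingHom (ZMod 3))) → IsUnit u := by
    intro u v huv hu
    have hu0 : u ≠ 0 := fun h0 => hfne (by rw [huv, h0, zero_mul])
    have hv0 : v ≠ 0 := fun h0 => hfne (by rw [huv, h0, mul_zero])
    have hmu0 : u.map (Int.castRingHom (ZMod 3)) ≠ 0 := hu.ne_zero
    have hmv0 : v.map (Int.castRingHom (ZMod 3)) ≠ 0 := by
      intro h0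
      apply hbarne
      rw [huv, Polynomial.map_mul, h0, mul_zero]
    have hdmap : (u.map (Int.castRingHom (ZMod 3))).natDegree = 0 :=
      natDegree_eq_zero_of_isUnit hu
    have hsum : u.natDegree + v.natDegree = 3 := by
      have hd := hdegf
      rw [huv, natDegree_mul hu0 hv0] at hd
      exact hd
    have hsum2 : (u.map (Int.castRingHom (ZMod 3))).natDegree +
        (v.map (Int.castRingHom (ZMod 3))).natDegree = 3 := by
      have hd := hdegbar
      rw [huv, Polynomial.map_mul, natDegree_mul hmu0 hmv0] at hd
      exact hd
    have h1 : (u.map (Int.castRingHom (ZMod 3))).natDegree ≤ u.natDegree := natDegree_map_le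
    have h2 : (v.map (Int.castRingHom (ZMod 3))).natDegree ≤ v.natDegree := natDegree_map_le
    have hu3 : u.natDegree = 0 := by omega
    have hueq : u = C (u.coeff 0) := eq_C_of_natDegree_eq_zero hu3
    have hdvd : u ∣ f := ⟨v, huv⟩
    rw [hueq, C_dvd_iff_dvd_coeff] at hdvd
    have d0 : u.coeff 0 ∣ a := coeff0 ▸ hdvd 0
    have d1 : u.coeff 0 ∣ 4*a - 1 := coeff1 ▸ hdvd 1
    have done1 : u.coeff 0 ∣ 1 := by
      have := dvd_sub (d0.mul_left 4) d1
      simpa using this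
    rw [hueq, isUnit_C]
    exact isUnit_of_dvd_one done1
  have hirrf : Irreducible f := by
    constructor
    · exact not_isUnit_of_natDegree_pos f (by omega)
    · intro u v huv
      rcases hirr.isUnit_or_isUnit
          (by rw [huv, Polynomial.map_mul] :
            f.map (Int.castRingHom (ZMod 3)) =
              u.map (Int.castRingHom (ZMod 3)) * v.map (Int.castRingHom (ZMod 3))) with hu | hv
      · exact Or.inl (key u v huv hu)
      · exact Or.inr (key v u (by rw [huv, mul_comm]) hv)
  have hfact : f.comp f =
      (C (32*a^2) * X^3 + C (32*a^2+16*a) * X^2 + C (-16*a^2+12*a+2) * X + C (-4*a^2-4*a+1)) *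
      (C (128*a^2) * X^6 + C (256*a^2+32*a) * X^5 + C (32*a) * X^4 + C (-160*a^2-16*a-4) * X^3
        + C (-4*a-2) * X^2 + C (16*a^2+1) * X + C (2*a^2)) := by
    rw [hf]
    simp only [add_comp, sub_comp, mul_comp, pow_comp, X_comp, C_comp]
    simp only [map_mul, map_add, map_sub, map_neg, map_pow, map_ofNat, map_one]
    ring
  have hgne : ¬ IsUnit (C (32*a^2) * X^3 + C (32*a^2+16*a) * X^2
      + C (-16*a^2+12*a+2) * X + C (-4*a^2-4*a+1) : ℤ[X]) := by
    apply not_isUnit_of_natDegree_pos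
    have : (C (32*a^2) * X^3 + C (32*a^2+16*a) * X^2
        + C (-16*a^2+12*a+2) * X + C (-4*a^2-4*a+1) : ℤ[X]).natDegree = 3 := by
      compute_degree!
    omega
  have hqne : ¬ IsUnit (C (128*a^2) * X^6 + C (256*a^2+32*a) * X^5 + C (32*a) * X^4
      + C (-160*a^2-16*a-4) * X^3 + C (-4*a-2) * X^2 + C (16*a^2+1) * X + C (2*a^2) : ℤ[X]) := by
    apply not_isUnit_of_natDegree_pos
    have : (C (128*a^2) * X^6 + C (256*a^2+32*a) * X^5 + C (32*a) * X^4
        + C (-160*a^2-16*a-4) * X^3 + C (-4*a-2) * X^2 + C (16*a^2+1) * X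
        + C (2*a^2) : ℤ[X]).natDegree = 6 := by
      compute_degree!
    omega
  refine ⟨hirrf, ?_, ?_⟩
  · rw [hfact]
    intro hu
    exact hgne (isUnit_of_mul_isUnit_left hu)
  · intro hi
    rcases hi.isUnit_or_isUnit hfact with hu | hu
    · exact hgne hu
    · exact hqne hu
end

section
/- The polynomial f(x) = x^3 + x^2 - 3x - 1 is irreducible over ℚ and f ∘ f is reducible in ℚ[x]. -/
open Polynomial

lemma aux_irr_int : Irreducible (X^3 + X^2 - 3*X - 1 : Polynomial ℤ) := by
  have hm : (X^3 + X^2 - 3*X - 1 : Polynomial ℤ).Monic := by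
    monicity!
  have hd : (X^3 + X^2 - 3*X - 1 : Polynomial ℤ).natDegree = 3 := by compute_degree!
  rw [hm.irreducible_iff_roots_eq_zero_of_degree_le_three (by omega) (by omega)]
  rw [Multiset.eq_zero_iff_forall_notMem]
  intro a ha
  rw [mem_roots hm.ne_zero] at ha
  have h : a^3 + a^2 - 3*a - 1 = 0 := by simpa [IsRoot] using ha
  have hdvd : a ∣ 1 := ⟨a^2 + a - 3, by linarith⟩
  rcases Int.isUnit_iff.mp (isUnit_of_dvd_one hdvd) with rfl | rfl <;> omega

theorem stmt_11 :
    Irreducible (X^3 + X^2 - 3*X - 1 : Polynomial ℚ) ∧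
    ¬ IsUnit ((X^3 + X^2 - 3*X - 1 : Polynomial ℚ).comp (X^3 + X^2 - 3*X - 1)) ∧
    ¬ Irreducible ((X^3 + X^2 - 3*X - 1 : Polynomial ℚ).comp (X^3 + X^2 - 3*X - 1)) := by
  have hm : (X^3 + X^2 - 3*X - 1 : Polynomial ℤ).Monic := by
    monicity!
  have hmap : (X^3 + X^2 - 3*X - 1 : Polynomial ℤ).map (algebraMap ℤ ℚ)
      = (X^3 + X^2 - 3*X - 1 : Polynomial ℚ) := by
    simp [Polynomial.map_sub, Polynomial.map_add, Polynomial.map_pow, Polynomial.map_mul]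
  have h1 : Irreducible (X^3 + X^2 - 3*X - 1 : Polynomial ℚ) := by
    rw [← hmap]
    exact (hm.isPrimitive.irreducible_iff_irreducible_map_fraction_map (K := ℚ)).mp aux_irr_int
  have heq : ((X^3 + X^2 - 3*X - 1 : Polynomial ℚ).comp (X^3 + X^2 - 3*X - 1))
      = (X^3 - 4*X + 2) * (X^6 + 3*X^5 - 2*X^4 - 9*X^3 + 5*X + 1) := by
    simp only [comp, eval₂_add, eval₂_sub, eval₂_mul, eval₂_pow, eval₂_X, eval₂_one,
      eval₂_ofNat]
    ring
  have hdA : (X^3 - 4*X + 2 : Polynomial ℚ).natDegree = 3 := by compute_degree!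
  have hdB : (X^6 + 3*X^5 - 2*X^4 - 9*X^3 + 5*X + 1 : Polynomial ℚ).natDegree = 6 := by
    compute_degree!
  refine ⟨h1, ?_, ?_⟩
  · rw [heq]
    intro h
    exact not_isUnit_of_natDegree_pos _ (by omega) (isUnit_of_mul_isUnit_left h)
  · intro h
    rcases h.isUnit_or_isUnit heq with h' | h'
    · exact not_isUnit_of_natDegree_pos _ (by omega) h'
    · exact not_isUnit_of_natDegree_pos _ (by omega) h'
end

section
/- The polynomial f(x) = x^3 + 4x^2 + 3x - 1 is irreducible over ℚ and f ∘ f is reducible in ℚ[x]. -/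
open Polynomial

/- Over ℤ, a monic cubic without integer roots is irreducible, and by Gauss's lemma so is its image
in ℚ[X]; an integer root of f would be a unit, and f(±1) ≠ 0. The composite f ∘ f factors as
(x³ + 5x² + 6x + 1)(x⁶ + 7x⁵ + 16x⁴ + 14x³ + 6x² - 1). -/

theorem Polynomial.Monic.irreducible_map_rat_of_natDegree_le_three {p : ℤ[X]} (hp : p.Monic)
    (hp2 : 2 ≤ p.natDegree) (hp3 : p.natDegree ≤ 3) (hroots : ∀ a : ℤ, ¬ p.IsRoot a) :
    Irreducible (p.map (Int.castRingHom ℚ)) := by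
  refine (hp.irreducible_iff_irreducible_map_fraction_map (K := ℚ)).mp ?_
  rw [hp.irreducible_iff_roots_eq_zero_of_degree_le_three hp2 hp3,
    Multiset.eq_zero_iff_forall_notMem]
  exact fun a ha => hroots a (isRoot_of_mem_roots ha)

theorem Polynomial.not_irreducible_mul_of_natDegree_pos {R : Type*} [Semiring R] [NoZeroDivisors R]
    {p q : R[X]} (hp : 0 < p.natDegree) (hq : 0 < q.natDegree) : ¬ Irreducible (p * q) :=
  fun h => (h.isUnit_or_isUnit rfl).elim
    (fun hu => hp.ne' (natDegree_eq_zero_of_isUnit hu))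
    (fun hu => hq.ne' (natDegree_eq_zero_of_isUnit hu))

theorem not_isRoot_cubic_int (a : ℤ) : ¬ (X^3 + 4*X^2 + 3*X - 1 : ℤ[X]).IsRoot a := by
  intro ha
  simp only [IsRoot.def, eval_sub, eval_add, eval_mul, eval_pow, eval_X, eval_one,
    eval_ofNat] at ha
  have hunit : a * (a^2 + 4*a + 3) = 1 := by linear_combination ha
  rcases Int.isUnit_iff.mp (.of_mul_eq_one _ hunit) with rfl | rfl <;> norm_num at hunit

theorem irreducible_cubic_rat : Irreducible (X^3 + 4*X^2 + 3*X - 1 : ℚ[X]) := by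
  have hmap : (X^3 + 4*X^2 + 3*X - 1 : ℤ[X]).map (Int.castRingHom ℚ) = X^3 + 4*X^2 + 3*X - 1 := by
    simp
  have hdeg : (X^3 + 4*X^2 + 3*X - 1 : ℤ[X]).natDegree = 3 := by compute_degree!
  rw [← hmap]
  exact Monic.irreducible_map_rat_of_natDegree_le_three (by monicity!) (by omega) (by omega)
    not_isRoot_cubic_int

theorem cubic_comp_cubic_eq_mul :
    (X^3 + 4*X^2 + 3*X - 1 : ℚ[X]).comp (X^3 + 4*X^2 + 3*X - 1) =
      (X^3 + 5*X^2 + 6*X + 1) * (X^6 + 7*X^5 + 16*X^4 + 14*X^3 + 6*X^2 - 1) := by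
  simp only [add_comp, sub_comp, mul_comp, pow_comp, X_comp, one_comp, ofNat_comp]
  ring

theorem stmt_12 :
    Irreducible (X^3 + 4*X^2 + 3*X - 1 : Polynomial ℚ) ∧
    ¬ IsUnit ((X^3 + 4*X^2 + 3*X - 1 : Polynomial ℚ).comp (X^3 + 4*X^2 + 3*X - 1)) ∧
    ¬ Irreducible ((X^3 + 4*X^2 + 3*X - 1 : Polynomial ℚ).comp (X^3 + 4*X^2 + 3*X - 1)) := by
  have hcubic : (X^3 + 4*X^2 + 3*X - 1 : ℚ[X]).natDegree = 3 := by compute_degree!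
  refine ⟨irreducible_cubic_rat, not_isUnit_of_natDegree_pos _ ?_, ?_⟩
  · rw [natDegree_comp, hcubic]
    norm_num
  · rw [cubic_comp_cubic_eq_mul]
    have hdeg3 : (X^3 + 5*X^2 + 6*X + 1 : ℚ[X]).natDegree = 3 := by compute_degree!
    have hdeg6 : (X^6 + 7*X^5 + 16*X^4 + 14*X^3 + 6*X^2 - 1 : ℚ[X]).natDegree = 6 := by
      compute_degree!
    exact not_irreducible_mul_of_natDegree_pos (by omega) (by omega)
end

section
/- The polynomial f(x) = x^3 + 6x^2 + 11x + 5 is irreducible over ℚ and f ∘ f is reducible in ℚ[x]. -/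
open Polynomial

theorem stmt_13 :
    Irreducible (X^3 + 6*X^2 + 11*X + 5 : Polynomial ℚ) ∧
    ¬ IsUnit ((X^3 + 6*X^2 + 11*X + 5 : Polynomial ℚ).comp (X^3 + 6*X^2 + 11*X + 5)) ∧
    ¬ Irreducible ((X^3 + 6*X^2 + 11*X + 5 : Polynomial ℚ).comp (X^3 + 6*X^2 + 11*X + 5)) := by
  have hfac : ((X^3 + 6*X^2 + 11*X + 5 : Polynomial ℚ).comp (X^3 + 6*X^2 + 11*X + 5)) =
      (X^3 + 5*X^2 + 8*X + 5) * (X^6 + 13*X^5 + 68*X^4 + 184*X^3 + 274*X^2 + 214*X + 67) := by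
    simp only [add_comp, mul_comp, pow_comp, X_comp, ofNat_comp, natCast_comp]
    ring
  refine ⟨?_, ?_, ?_⟩
  · have h1 : (X^3 + 6*X^2 + 11*X + 5 : Polynomial ℚ) =
        (algEquivAevalXAddC (2 : ℚ)) (X^3 - X - 1) := by
      simp [algEquivAevalXAddC, aeval_def, eval₂_sub, eval₂_pow, map_ofNat]
      ring
    rw [h1]
    exact (MulEquiv.irreducible_iff (algEquivAevalXAddC (2 : ℚ)).toMulEquiv).mpr
      (X_pow_sub_X_sub_one_irreducible_rat (by norm_num))
  · rw [hfac]
    apply not_isUnit_of_natDegree_pos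
    have : ((X^3 + 5*X^2 + 8*X + 5 : ℚ[X]) * (X^6 + 13*X^5 + 68*X^4 + 184*X^3 + 274*X^2 + 214*X + 67)).natDegree = 9 := by
      compute_degree!
    omega
  · intro h
    have h35 : ¬ IsUnit (X^3 + 5*X^2 + 8*X + 5 : ℚ[X]) := by
      apply not_isUnit_of_natDegree_pos
      have : (X^3 + 5*X^2 + 8*X + 5 : ℚ[X]).natDegree = 3 := by compute_degree!
      omega
    have h6 : ¬ IsUnit (X^6 + 13*X^5 + 68*X^4 + 184*X^3 + 274*X^2 + 214*X + 67 : ℚ[X]) := by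
      apply not_isUnit_of_natDegree_pos
      have : (X^6 + 13*X^5 + 68*X^4 + 184*X^3 + 274*X^2 + 214*X + 67 : ℚ[X]).natDegree = 6 := by
        compute_degree!
      omega
    rcases h.isUnit_or_isUnit hfac with h' | h'
    · exact h35 h'
    · exact h6 h'
end

section
/- The polynomial f(x) = x^3 + 9x^2 + 23x + 13 is irreducible over ℚ and f ∘ f is reducible in ℚ[x]. -/
open Polynomial

theorem stmt_14 :
    Irreducible (X^3 + 9*X^2 + 23*X + 13 : Polynomial ℚ) ∧
    ¬ IsUnit ((X^3 + 9*X^2 + 23*X + 13 : Polynomial ℚ).comp (X^3 + 9*X^2 + 23*X + 13)) ∧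
    ¬ Irreducible ((X^3 + 9*X^2 + 23*X + 13 : Polynomial ℚ).comp (X^3 + 9*X^2 + 23*X + 13)) := by
  have hcomp : ((X^3 + 9*X^2 + 23*X + 13 : Polynomial ℚ).comp (X^3 + 9*X^2 + 23*X + 13))
      = (X^3 + 10*X^2 + 30*X + 26) *
        (X^6 + 17*X^5 + 112*X^4 + 363*X^3 + 608*X^2 + 497*X + 155) := by
    simp only [add_comp, mul_comp, pow_comp, X_comp, ofNat_comp, natCast_comp]
    ring
  have hd3 : (X^3 + 10*X^2 + 30*X + 26 : Polynomial ℚ).natDegree = 3 := by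
    compute_degree!
  have hd6 : (X^6 + 17*X^5 + 112*X^4 + 363*X^3 + 608*X^2 + 497*X + 155 : Polynomial ℚ).natDegree = 6 := by
    compute_degree!
  refine ⟨?_, ?_, ?_⟩
  · -- irreducibility of the cubic
    have hdeg : (X^3 + 9*X^2 + 23*X + 13 : Polynomial ℚ).natDegree = 3 := by
      compute_degree!
    rw [irreducible_iff_roots_eq_zero_of_degree_le_three (by omega) (by omega)]
    rw [Multiset.eq_zero_iff_forall_notMem]
    intro r hr
    rw [mem_roots', IsRoot.def] at hr
    have hr' : r ^ 3 + 9 * r ^ 2 + 23 * r + 13 = 0 := by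
      simpa using hr.2
      -- r is integral over ℤ
    have hint : IsIntegral ℤ r := by
      refine ⟨X^3 + 9*X^2 + 23*X + 13, ?_, ?_⟩
      · monicity!
      · simp
        linear_combination hr'
    obtain ⟨z, hz⟩ := IsIntegrallyClosed.isIntegral_iff.mp hint
    have hzr : (z : ℚ) = r := by exact_mod_cast hz
    rw [← hzr] at hr'
    have hzeq : z ^ 3 + 9 * z ^ 2 + 23 * z + 13 = 0 := by exact_mod_cast hr'
    have hdvd : z ∣ 13 := ⟨-(z^2 + 9*z + 23), by linarith [hzeq]⟩
    have habs : z.natAbs ≤ 13 := Int.natAbs_le_of_dvd_ne_zero hdvd (by norm_num)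
    have hb1 : -13 ≤ z := by omega
    have hb2 : z ≤ 13 := by omega
    interval_cases z <;> norm_num at hzeq
  · rw [hcomp]
    intro h
    have := natDegree_eq_zero_of_isUnit h
    rw [natDegree_mul, hd3, hd6] at this
    · norm_num at this
    · intro h0; rw [h0] at hd3; simp at hd3
    · intro h0; rw [h0] at hd6; simp at hd6
  · rw [hcomp]
    intro h
    rcases h.isUnit_or_isUnit rfl with h1 | h1
    · exact not_isUnit_of_natDegree_pos _ (by omega) h1
    · exact not_isUnit_of_natDegree_pos _ (by omega) h1
end

section
/- The two-variable polynomial f(a,x) = -8a x^3 - (8a+2) x^2 + (4a-1) x + a, viewed as a polynomial in ℚ[a][x] (equivalently ℚ[a,x]), is irreducible. -/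
open Polynomial

noncomputable def swHom : Polynomial (Polynomial ℚ) →+* Polynomial (Polynomial ℚ) :=
  eval₂RingHom (eval₂RingHom (C.comp C) X) (C X)

lemma swHom_C (p : Polynomial ℚ) : swHom (C p) = eval₂ (C.comp C) X p := by
  simp [swHom]

lemma swHom_X : swHom (X : Polynomial (Polynomial ℚ)) = C X := by
  simp [swHom]

lemma swHom_CX : swHom (C (X : Polynomial ℚ)) = X := by
  simp [swHom_C]

lemma swHom_CC (q : ℚ) : swHom (C (C q)) = C (C q) := by
  simp [swHom_C]

lemma swHom_comp : swHom.comp swHom = RingHom.id _ := by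
  apply ringHom_ext'
  · apply ringHom_ext'
    · ext q
      simp [swHom_CC]
    · simp [swHom_CX, swHom_X]
  · simp [swHom_X, swHom_CX]

noncomputable def swEquiv : Polynomial (Polynomial ℚ) ≃+* Polynomial (Polynomial ℚ) :=
  { swHom with
    invFun := swHom
    left_inv := fun p => by
      have := congrArg (fun f => f p) swHom_comp
      simpa using this
    right_inv := fun p => by
      have := congrArg (fun f => f p) swHom_comp
      simpa using this }

lemma coprime_gh :
    IsCoprime (-8*X^3 - 8*X^2 + 4*X + 1 : Polynomial ℚ) (-2*X^2 - X : Polynomial ℚ) := by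
  refine ⟨3*X + 1, -12*X^2 - 10*X + 7, ?_⟩
  ring

lemma irred_q :
    Irreducible (C (-8*X^3 - 8*X^2 + 4*X + 1 : Polynomial ℚ) * X
      + C (-2*X^2 - X : Polynomial ℚ)) := by
  set g : Polynomial ℚ := -8*X^3 - 8*X^2 + 4*X + 1 with hg
  set h : Polynomial ℚ := -2*X^2 - X with hh
  have hg0 : g ≠ 0 := by
    intro h0
    have := congrArg (fun p => Polynomial.coeff p 0) h0
    simp [hg] at this
  have hprim : (C g * X + C h).IsPrimitive := by
    intro r hr
    rw [C_dvd_iff_dvd_coeff] at hr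
    have h1 := hr 1
    have h0 := hr 0
    simp [coeff_add, coeff_C_mul, coeff_C] at h1 h0
    exact coprime_gh.isUnit_of_dvd' h1 h0
  rw [hprim.irreducible_iff_irreducible_map_fraction_map (K := RatFunc ℚ)]
  apply irreducible_of_degree_eq_one
  rw [Polynomial.map_add, Polynomial.map_mul, map_C, map_X, map_C]
  apply degree_linear
  simpa using (IsFractionRing.injective (Polynomial ℚ) (RatFunc ℚ)).ne hg0

theorem stmt_17 :
    Irreducible (C (-8*X) * X^3 - C (8*X+2) * X^2 + C (4*X-1) * X + C X :
      Polynomial (Polynomial ℚ)) := by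
  rw [← MulEquiv.irreducible_iff swEquiv]
  have : swEquiv (C (-8*X) * X^3 - C (8*X+2) * X^2 + C (4*X-1) * X + C X :
      Polynomial (Polynomial ℚ)) =
      C (-8*X^3 - 8*X^2 + 4*X + 1 : Polynomial ℚ) * X + C (-2*X^2 - X : Polynomial ℚ) := by
    show swHom _ = _
    show swHom _ = _
    simp only [swHom, coe_eval₂RingHom, eval₂_add, eval₂_sub, eval₂_mul, eval₂_pow,
      eval₂_X, eval₂_C, eval₂_ofNat, eval₂_one, eval₂_neg, RingHom.coe_comp, Function.comp,
      map_add, map_sub, map_neg, map_mul, map_pow, map_ofNat, map_one]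
    ring
  rw [this]
  exact irred_q
end

section
/- For a ≡ 1 or 2 mod 3, the polynomial f_a(x) = -8a x^3 - (8a+2) x^2 + (4a-1) x + a has no rational roots. -/
open Polynomial

-- A root `n / d` in lowest terms has `d ∣ f.leadingCoeff`, so `φ d ≠ 0` and `φ n / φ d` is a
-- root of `f.map φ`.
theorem Polynomial.aeval_ne_zero_of_forall_not_isRoot_map {A K F : Type*} [CommRing A] [IsDomain A]
    [UniqueFactorizationMonoid A] [Field K] [Algebra A K] [IsFractionRing A K] [Field F]
    (φ : A →+* F) {f : A[X]} (hlc : φ f.leadingCoeff ≠ 0)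
    (hf : ∀ x : F, ¬ (f.map φ).IsRoot x) (r : K) : aeval r f ≠ 0 := by
  intro hr
  set n := IsFractionRing.num A r
  set d : A := (IsFractionRing.den A r : A)
  have hd : φ d ≠ 0 := by
    obtain ⟨k, hk⟩ := den_dvd_of_is_root hr
    intro h
    exact hlc (by rw [hk, map_mul, h, zero_mul])
  have hscaled : eval₂ φ (φ d * (φ n / φ d)) (scaleRoots f d) = 0 := by
    rw [mul_div_cancel₀ _ hd, eval₂_hom, (num_isRoot_scaleRoots_of_aeval_eq_zero hr).eq_zero,
      map_zero]
  rw [scaleRoots_eval₂_mul] at hscaled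
  exact hf _ (by simpa [IsRoot, eval_map, hd] using hscaled)

theorem ZMod.intCast_three_eq_one_or_two {a : ℤ} (h : a % 3 = 1 ∨ a % 3 = 2) :
    (a : ZMod 3) = 1 ∨ (a : ZMod 3) = 2 := by
  rw [← ZMod.intCast_mod a 3]
  rcases h with h | h <;> simp [h]

theorem stmt_19 (a : ℤ) (h : a % 3 = 1 ∨ a % 3 = 2) (r : ℚ) :
    aeval r (C (-8*a) * X^3 - C (8*a+2) * X^2 + C (4*a-1) * X + C a : Polynomial ℤ) ≠ 0 := by
  have ha : a ≠ 0 := by rintro rfl; simp at h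
  have hcubic : (C (-8*a) * X^3 - C (8*a+2) * X^2 + C (4*a-1) * X + C a : ℤ[X]) =
      C (-8*a) * X^3 + C (-(8*a+2)) * X^2 + C (4*a-1) * X + C a := by
    simp only [C_neg, neg_mul, sub_eq_add_neg]
  have ha3 := ZMod.intCast_three_eq_one_or_two h
  rw [hcubic]
  refine aeval_ne_zero_of_forall_not_isRoot_map (Int.castRingHom (ZMod 3)) ?_ ?_ r
  · rw [leadingCoeff_cubic (by simpa using ha)]
    rcases ha3 with h3 | h3 <;> simp [h3] <;> decide
  · intro x
    simp only [IsRoot, eval_map, eval₂_add, eval₂_mul, eval₂_C, eval₂_X_pow, eval₂_X]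
    push_cast [eq_intCast]
    generalize (a : ZMod 3) = b at ha3
    revert x
    rcases ha3 with rfl | rfl <;> decide
end
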